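/- arXiv:0901.1298 — 3 statements merged into one kernel-verified Lean document; each statement's English description precedes it below -/
import Mathlib

section
/- The maps D and d on SC(T) satisfy D∘D = 0, d∘d = 0, and D∘d = d∘D; consequently (D+d)∘(D+d) = 0, i.e. D+d is a differential on SC(T). -/
/-!
Both `d` and `D` act locally: `d` turns the plus at one vertex into a minus, `D` deletes one red
edge and signs its two endpoints `+` and `−`. The coefficient of `C''` in `X (Y C)` is the number
of paths `C → C' → C''` made of a `Y`-step and an `X`-step, so over `F₂` it suffices to pair these
paths off. When the two steps change the signs of disjoint sets of vertices, the partner path makes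
the same two changes in the opposite order (`Config.complete`). This pairs all paths for `DD` and
`dd`, and pairs the paths for `dD` with those for `Dd`, with one exception: `D` deleting the red
edge `uv` and giving `u` the plus, followed by `d` at `u`. That path is paired with the one giving
`v` the plus instead.
-/

open Polynomial Matrix

attribute [local instance] Classical.propDecidable

namespace Seifert

variable {V : Type} [Fintype V]

/-- A matching of a graph `G`: a finite set of edges of `G` that are pairwise disjoint. -/
def IsMatching (G : SimpleGraph V) (R : Finset (Sym2 V)) : Prop :=
  (∀ e ∈ R, e ∈ G.edgeSet) ∧
    ∀ e ∈ R, ∀ f ∈ R, e ≠ f → ∀ v : V, v ∈ e → v ∉ f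

/-- A perfect matching: a matching covering every vertex. -/
def IsPerfectMatching (G : SimpleGraph V) (R : Finset (Sym2 V)) : Prop :=
  IsMatching G R ∧ ∀ v : V, ∃ e ∈ R, v ∈ e

/-- A configuration on `G`: a matching (the set of red edges) together with an assignment
of a sign (`true` = plus, `false` = minus) to every vertex not covered by a red edge;
vertices covered by a red edge get `none`. -/
structure Config (G : SimpleGraph V) where
  red : Finset (Sym2 V)
  matching : IsMatching G red
  sign : V → Option Bool
  sign_none : ∀ v : V, sign v = none ↔ ∃ e ∈ red, v ∈ e

instance (G : SimpleGraph V) : Finite (Config G) :=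
  Finite.of_injective (fun C => (C.red, C.sign)) (by
    rintro ⟨r, hr, s, hs⟩ ⟨r', hr', s', hs'⟩ h
    simp only [Prod.mk.injEq] at h
    obtain ⟨h1, h2⟩ := h
    subst h1; subst h2; rfl)

noncomputable instance (G : SimpleGraph V) : Fintype (Config G) := Fintype.ofFinite _

/-- The grading `Q`: the number of minuses. -/
noncomputable def Qg {G : SimpleGraph V} (C : Config G) : ℕ :=
  (Finset.univ.filter fun v : V => C.sign v = some false).card

/-- The grading `E`: the number of minuses plus the number of red edges. -/
noncomputable def Eg {G : SimpleGraph V} (C : Config G) : ℕ := Qg C + C.red.card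

/-- `DStep C C'` holds iff `C'` is one of the summands of `D(C)`: it is obtained from `C`
by deleting one red edge `e` and assigning a plus to one endpoint of `e` and a minus to
the other. -/
def DStep {G : SimpleGraph V} (C C' : Config G) : Prop :=
  ∃ e ∈ C.red, C'.red = C.red.erase e ∧
    (∀ x : V, x ∉ e → C'.sign x = C.sign x) ∧
    ∃ u v : V, e = s(u, v) ∧ C'.sign u = some true ∧ C'.sign v = some false

/-- `dStep C C'` holds iff `C'` is one of the summands of `d(C)`: it is obtained from `C`
by changing the sign of one vertex from plus to minus. -/
def dStep {G : SimpleGraph V} (C C' : Config G) : Prop :=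
  C'.red = C.red ∧ ∃ w : V, C.sign w = some true ∧ C'.sign w = some false ∧
    ∀ x : V, x ≠ w → C'.sign x = C.sign x

/-- The linear map on spaces of `F₂`-valued functions induced by a relation `r`:
the basis vector of `a` is sent to the sum of the basis vectors of all `b` with `r a b`. -/
noncomputable def sumLin {α β : Type} [Fintype α] (r : α → β → Prop) :
    (α → ZMod 2) →ₗ[ZMod 2] (β → ZMod 2) where
  toFun f b := ∑ a : α, if r a b then f a else 0
  map_add' f g := by
    funext b
    simp only [Pi.add_apply]
    rw [← Finset.sum_add_distrib]
    exact Finset.sum_congr rfl fun a _ => by by_cases h : r a b <;> simp [h]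
  map_smul' c f := by
    funext b
    simp only [RingHom.id_apply, Pi.smul_apply, smul_eq_mul, Finset.mul_sum]
    exact Finset.sum_congr rfl fun a _ => by by_cases h : r a b <;> simp [h]

/-- The differential `D` on the total Seifert complex `SC(T)`. -/
noncomputable def Dmap (G : SimpleGraph V) :
    (Config G → ZMod 2) →ₗ[ZMod 2] (Config G → ZMod 2) :=
  sumLin DStep

/-- The differential `d` on the total Seifert complex `SC(T)`. -/
noncomputable def dmap (G : SimpleGraph V) :
    (Config G → ZMod 2) →ₗ[ZMod 2] (Config G → ZMod 2) :=
  sumLin dStep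

/-- The graded piece `SC^k(T,n)`: the `F₂`-vector space with basis the configurations
with `Q = k` and `E = n`. -/
abbrev SC (G : SimpleGraph V) (k n : ℤ) : Type :=
  {C : Config G // (Qg C : ℤ) = k ∧ (Eg C : ℤ) = n} → ZMod 2

/-- The differential `D` between graded pieces. (Mathematically it is nonzero only
from `SC^k(T,n)` to `SC^{k+1}(T,n)`.) -/
noncomputable def Dgr (G : SimpleGraph V) (k n k' n' : ℤ) :
    SC G k n →ₗ[ZMod 2] SC G k' n' :=
  sumLin fun C C' => DStep C.1 C'.1

/-- The dimension of the cohomology `ker g / im f` at the middle term of `A —f→ B —g→ C`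
(taking the image of `f` intersected with the kernel of `g`). -/
noncomputable def cohDim {A B M : Type} [AddCommGroup A] [AddCommGroup B] [AddCommGroup M]
    [Module (ZMod 2) A] [Module (ZMod 2) B] [Module (ZMod 2) M]
    (f : A →ₗ[ZMod 2] B) (g : B →ₗ[ZMod 2] M) : ℕ :=
  Module.finrank (ZMod 2)
    (LinearMap.ker g ⧸ (LinearMap.range f).comap (LinearMap.ker g).subtype)

/-- The dimension of the Seifert cohomology `SH^k(T,n)`. -/
noncomputable def SHdim (G : SimpleGraph V) (k n : ℤ) : ℕ :=
  cohDim (Dgr G (k - 1) n k n) (Dgr G k n (k + 1) n)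

/-- The Seifert matrix of a graph with respect to an enumeration of its vertices. -/
noncomputable def seifertMatrix (G : SimpleGraph V) {m : ℕ} (e : V ≃ Fin m) :
    Matrix (Fin m) (Fin m) ℤ := fun i j =>
  if i = j then -1 else if i < j ∧ G.Adj (e.symm i) (e.symm j) then 1 else 0

/-- The Alexander polynomial `det (t S - Sᵀ)` of a graph with respect to an enumeration
of its vertices. -/
noncomputable def alexDet (G : SimpleGraph V) {m : ℕ} (e : V ≃ Fin m) : Polynomial ℤ :=
  let S : Matrix (Fin m) (Fin m) (Polynomial ℤ) :=
    (seifertMatrix G e).map fun a => (Polynomial.C a : Polynomial ℤ)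
  ((X : Polynomial ℤ) • S - Sᵀ).det

/-- The Alexander polynomial of a graph (or forest), defined as the matching polynomial
`Σ_R t^{|R|} (1-t)^{V - 2|R|}`, the sum being over all matchings `R`. -/
noncomputable def alexMatch (G : SimpleGraph V) : Polynomial ℤ :=
  ∑ R : {R : Finset (Sym2 V) // IsMatching G R},
    X ^ R.1.card * (1 - X) ^ (Fintype.card V - 2 * R.1.card)

end Seifert

namespace Seifert

open Finset

lemma cast_card_eq_zero_of_involution {α : Type*} (s : Finset α) (g : ∀ a ∈ s, α)
    (g_ne : ∀ a ha, g a ha ≠ a) (g_mem : ∀ a ha, g a ha ∈ s)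
    (g_inv : ∀ a ha, g (g a ha) (g_mem a ha) = a) : (#s : ZMod 2) = 0 := by
  simpa using sum_involution (f := fun _ => (1 : ZMod 2)) g (fun _ _ => by decide)
    (fun a ha _ => g_ne a ha) g_mem g_inv

section sumLin

variable {α β γ : Type} [Fintype α] [Fintype β]

lemma sumLin_comp_apply (q : α → β → Prop) (r : β → γ → Prop) (f : α → ZMod 2) (c : γ) :
    (sumLin r ∘ₗ sumLin q) f c = ∑ a, (#{b | q a b ∧ r b c} : ZMod 2) * f a := calc
  _ = ∑ b, if r b c then ∑ a, (if q a b then f a else 0) else 0 := rfl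
  _ = ∑ b, ∑ a, if q a b ∧ r b c then f a else 0 :=
    sum_congr rfl fun b _ => by by_cases h : r b c <;> simp [h]
  _ = _ := by
    rw [sum_comm]
    exact sum_congr rfl fun a _ => by rw [← sum_filter, sum_const, nsmul_eq_mul]

lemma sumLin_comp_eq_zero {q : α → β → Prop} {r : β → α → Prop}
    (h : ∀ a c, (#{b | q a b ∧ r b c} : ZMod 2) = 0) : sumLin r ∘ₗ sumLin q = 0 :=
  LinearMap.ext fun f => funext fun c => by simp [sumLin_comp_apply, h]

lemma sumLin_comp_eq_sumLin_comp {q q' : α → β → Prop} {r r' : β → α → Prop}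
    (h : ∀ a c, (#{b | q a b ∧ r b c} : ZMod 2) = #{b | q' a b ∧ r' b c}) :
    sumLin r ∘ₗ sumLin q = sumLin r' ∘ₗ sumLin q' :=
  LinearMap.ext fun f => funext fun c => by simp only [sumLin_comp_apply, h]

end sumLin

variable {V : Type} {G : SimpleGraph V}

lemma IsMatching.mono {R S : Finset (Sym2 V)} (hR : IsMatching G R) (hS : S ⊆ R) :
    IsMatching G S :=
  ⟨fun e he => hR.1 e (hS he), fun e he f hf => hR.2 e (hS he) f (hS hf)⟩

lemma IsMatching.eq_of_mem {R : Finset (Sym2 V)} (hR : IsMatching G R) {e f : Sym2 V}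
    (he : e ∈ R) (hf : f ∈ R) {x : V} (hxe : x ∈ e) (hxf : x ∈ f) : e = f := by
  by_contra hne
  exact hR.2 e he f hf hne x hxe hxf

namespace Config

lemma ext {C C' : Config G} (hred : C.red = C'.red) (hsign : C.sign = C'.sign) : C = C' := by
  cases C; cases C'; cases hred; cases hsign; rfl

lemma sign_eq_none_of_mem (C : Config G) {e : Sym2 V} (he : e ∈ C.red) {x : V} (hx : x ∈ e) :
    C.sign x = none :=
  (C.sign_none x).2 ⟨e, he, hx⟩

def signDiff (C C' : Config G) : Set V := {x | C.sign x ≠ C'.sign x}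

lemma mem_signDiff {C C' : Config G} {x : V} : x ∈ C.signDiff C' ↔ C.sign x ≠ C'.sign x :=
  Iff.rfl

lemma notMem_signDiff {C C' : Config G} {x : V} : x ∉ C.signDiff C' ↔ C.sign x = C'.sign x :=
  not_not

structure SameChange (C₁ C₁' C₂ C₂' : Config G) : Prop where
  red_subset : C₂'.red ⊆ C₂.red
  red_sdiff : C₂.red \ C₂'.red = C₁.red \ C₁'.red
  sign_of_mem : ∀ x ∈ C₁.signDiff C₁', C₂.sign x = C₁.sign x ∧ C₂'.sign x = C₁'.sign x
  sign_of_not_mem : ∀ x ∉ C₁.signDiff C₁', C₂.sign x = C₂'.sign x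

lemma SameChange.signDiff_subset {C₁ C₁' C₂ C₂' : Config G} (h : SameChange C₁ C₁' C₂ C₂') :
    C₂.signDiff C₂' ⊆ C₁.signDiff C₁' :=
  fun x hx => by_contra fun hx' => hx (h.sign_of_not_mem x hx')

structure IsLocalStep (X : Config G → Config G → Prop) : Prop where
  red_subset {C C' : Config G} : X C C' → C'.red ⊆ C.red
  signDiff_nonempty {C C' : Config G} : X C C' → (C.signDiff C').Nonempty
  /-- whether `X C C'` holds depends only on the change from `C` to `C'` -/
  of_sameChange {C₁ C₁' C₂ C₂' : Config G} : X C₁ C₁' → SameChange C₁ C₁' C₂ C₂' → X C₂ C₂'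

section complete

variable (C C' C'' : Config G) (h₁ : C'.red ⊆ C.red) (h₂ : C''.red ⊆ C'.red)

/-- The fourth corner of the parallelogram spanned by the changes `C → C'` and `C' → C''`:
the configuration `C''` with the change from `C` to `C'` undone. -/
noncomputable def complete : Config G where
  red := C''.red ∪ (C.red \ C'.red)
  matching := C.matching.mono (union_subset (h₂.trans h₁) sdiff_subset)
  sign x := if x ∈ C.signDiff C' then C.sign x else C''.sign x
  sign_none x := by
    split_ifs with hx
    · rw [C.sign_none]
      constructor
      · rintro ⟨e, he, hxe⟩
        refine ⟨e, mem_union_right _ (mem_sdiff.2 ⟨he, fun he' => hx ?_⟩), hxe⟩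
        rw [C.sign_eq_none_of_mem he hxe, C'.sign_eq_none_of_mem he' hxe]
      · rintro ⟨e, he, hxe⟩
        exact ⟨e, (mem_union.1 he).elim (fun h => h₁ (h₂ h)) (fun h => (mem_sdiff.1 h).1), hxe⟩
    · rw [C''.sign_none]
      constructor
      · rintro ⟨e, he, hxe⟩
        exact ⟨e, mem_union_left _ he, hxe⟩
      · rintro ⟨e, he, hxe⟩
        refine (mem_union.1 he).elim (fun he => ⟨e, he, hxe⟩) fun he => ?_
        obtain ⟨heC, heC'⟩ := mem_sdiff.1 he
        obtain ⟨f, hf, hxf⟩ :=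
          (C'.sign_none x).1 (notMem_signDiff.1 hx ▸ C.sign_eq_none_of_mem heC hxe)
        exact absurd (C.matching.eq_of_mem heC (h₁ hf) hxe hxf ▸ hf) heC'

variable {C C' C''}

lemma complete_sign_of_mem {x : V} (hx : x ∈ C.signDiff C') :
    (complete C C' C'' h₁ h₂).sign x = C.sign x :=
  if_pos hx

lemma complete_sign_of_not_mem {x : V} (hx : x ∉ C.signDiff C') :
    (complete C C' C'' h₁ h₂).sign x = C''.sign x :=
  if_neg hx

lemma complete_ne (hC : (C.signDiff C').Nonempty) : complete C C' C'' h₁ h₂ ≠ C' := by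
  obtain ⟨x, hx⟩ := hC
  intro h
  apply hx
  rw [← complete_sign_of_mem h₁ h₂ hx, h]

variable (hd : Disjoint (C.signDiff C') (C'.signDiff C''))
include hd

lemma sameChange_complete_left : SameChange C' C'' C (complete C C' C'' h₁ h₂) where
  red_subset := union_subset (h₂.trans h₁) sdiff_subset
  red_sdiff := by
    ext e
    have := @h₁ e
    have := @h₂ e
    simp only [complete, mem_sdiff, mem_union]
    tauto
  sign_of_mem x hx := by
    have hx' : x ∉ C.signDiff C' := hd.notMem_of_mem_right hx
    exact ⟨notMem_signDiff.1 hx', complete_sign_of_not_mem h₁ h₂ hx'⟩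
  sign_of_not_mem x hx := by
    by_cases hx' : x ∈ C.signDiff C'
    · rw [complete_sign_of_mem h₁ h₂ hx']
    · rw [complete_sign_of_not_mem h₁ h₂ hx', notMem_signDiff.1 hx', notMem_signDiff.1 hx]

lemma sameChange_complete_right : SameChange C C' (complete C C' C'' h₁ h₂) C'' where
  red_subset := subset_union_left
  red_sdiff := by
    ext e
    have := @h₂ e
    simp only [complete, mem_sdiff, mem_union]
    tauto
  sign_of_mem x hx :=
    ⟨complete_sign_of_mem h₁ h₂ hx, (notMem_signDiff.1 (hd.notMem_of_mem_left hx)).symm⟩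
  sign_of_not_mem x hx := complete_sign_of_not_mem h₁ h₂ hx

lemma disjoint_signDiff_complete :
    Disjoint (C.signDiff (complete C C' C'' h₁ h₂)) ((complete C C' C'' h₁ h₂).signDiff C'') :=
  hd.symm.mono (sameChange_complete_left h₁ h₂ hd).signDiff_subset
    (sameChange_complete_right h₁ h₂ hd).signDiff_subset

lemma complete_complete (h₁' : (complete C C' C'' h₁ h₂).red ⊆ C.red)
    (h₂' : C''.red ⊆ (complete C C' C'' h₁ h₂).red) :
    complete C (complete C C' C'' h₁ h₂) C'' h₁' h₂' = C' := by
  refine ext ?_ (funext fun x => ?_)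
  · ext e
    have := @h₁ e
    have := @h₂ e
    simp only [complete, mem_sdiff, mem_union]
    tauto
  · by_cases h1 : x ∈ C.signDiff C'
    · have h2 : x ∉ C.signDiff (complete C C' C'' h₁ h₂) :=
        notMem_signDiff.2 (complete_sign_of_mem h₁ h₂ h1).symm
      rw [complete_sign_of_not_mem _ _ h2]
      exact (notMem_signDiff.1 (hd.notMem_of_mem_left h1)).symm
    · rw [← notMem_signDiff.1 h1]
      by_cases h2 : x ∈ C.signDiff (complete C C' C'' h₁ h₂)
      · exact complete_sign_of_mem _ _ h2
      · rw [complete_sign_of_not_mem _ _ h2, notMem_signDiff.1 h2,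
          complete_sign_of_not_mem _ _ h1]

end complete

lemma IsLocalStep.complete {X Y : Config G → Config G → Prop} (hX : IsLocalStep X)
    (hY : IsLocalStep Y) {C C' C'' : Config G} (h₁ : X C C') (h₂ : Y C' C'')
    (hd : Disjoint (C.signDiff C') (C'.signDiff C'')) :
    Y C (complete C C' C'' (hX.red_subset h₁) (hY.red_subset h₂)) ∧
      X (complete C C' C'' (hX.red_subset h₁) (hY.red_subset h₂)) C'' :=
  ⟨hY.of_sameChange h₂ (sameChange_complete_left _ _ hd),
    hX.of_sameChange h₁ (sameChange_complete_right _ _ hd)⟩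

lemma IsLocalStep.card_comp_eq_zero [Fintype V] {X : Config G → Config G → Prop}
    (hX : IsLocalStep X)
    (hdisj : ∀ {C C' C''}, X C C' → X C' C'' → Disjoint (C.signDiff C') (C'.signDiff C''))
    (C C'' : Config G) : (#{C' | X C C' ∧ X C' C''} : ZMod 2) = 0 := by
  have hmem {C'} (h : C' ∈ ({C' | X C C' ∧ X C' C''} : Finset _)) : X C C' ∧ X C' C'' :=
    (mem_filter.1 h).2
  exact cast_card_eq_zero_of_involution _
    (fun C' h => Config.complete C C' C'' (hX.red_subset (hmem h).1) (hX.red_subset (hmem h).2))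
    (fun C' h => complete_ne _ _ (hX.signDiff_nonempty (hmem h).1))
    (fun C' h => mem_filter.2 ⟨mem_univ _, hX.complete hX (hmem h).1 (hmem h).2
      (hdisj (hmem h).1 (hmem h).2)⟩)
    (fun C' h => complete_complete _ _ (hdisj (hmem h).1 (hmem h).2) _ _)

noncomputable def negSigns (C : Config G) (S : Set V) : Config G where
  red := C.red
  matching := C.matching
  sign x := if x ∈ S then (C.sign x).map not else C.sign x
  sign_none x := by split_ifs <;> simp [C.sign_none]

variable {C C' : Config G} {S : Set V} {x : V}

lemma negSigns_sign_of_mem (hx : x ∈ S) : (C.negSigns S).sign x = (C.sign x).map not :=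
  if_pos hx

lemma negSigns_sign_of_not_mem (hx : x ∉ S) : (C.negSigns S).sign x = C.sign x :=
  if_neg hx

lemma negSigns_negSigns (C : Config G) (S : Set V) : (C.negSigns S).negSigns S = C :=
  ext rfl <| funext fun x => by
    by_cases hx : x ∈ S
    · rw [negSigns_sign_of_mem hx, negSigns_sign_of_mem hx, Option.map_map]
      cases C.sign x <;> simp
    · rw [negSigns_sign_of_not_mem hx, negSigns_sign_of_not_mem hx]

lemma negSigns_ne (hx : x ∈ S) (hC : C.sign x ≠ none) : C.negSigns S ≠ C := fun h => by
  have := congrArg (·.sign x) h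
  simp only [negSigns_sign_of_mem hx] at this
  obtain ⟨b, hb⟩ := Option.ne_none_iff_exists'.1 hC
  simp [hb] at this

lemma signDiff_negSigns (h : ∀ x ∈ C.signDiff C', C.sign x = none) :
    C.signDiff (C'.negSigns (C.signDiff C')) = C.signDiff C' := by
  ext x
  by_cases hx : x ∈ C.signDiff C'
  · simp only [hx, iff_true, mem_signDiff, negSigns_sign_of_mem hx, h x hx]
    have hC' : C'.sign x ≠ none := fun h' => hx (by rw [h x hx, h'])
    simpa using hC'
  · simp only [hx, iff_false, notMem_signDiff, negSigns_sign_of_not_mem hx]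
    exact notMem_signDiff.1 hx


end Config

open Config

section steps

variable {C C' C'' : Config G} {x : V}

lemma dStep.sign_of_mem_signDiff (h : dStep C C') (hx : x ∈ C.signDiff C') :
    C.sign x = some true ∧ C'.sign x = some false := by
  obtain ⟨-, w, hw, hw', hagree⟩ := h
  obtain rfl : x = w := by_contra fun hxw => hx (hagree x hxw).symm
  exact ⟨hw, hw'⟩

lemma DStep.sign_eq_none_of_mem_signDiff (h : DStep C C') (hx : x ∈ C.signDiff C') :
    C.sign x = none := by
  obtain ⟨e, he, -, hagree, -⟩ := h
  exact C.sign_eq_none_of_mem he (by_contra fun hxe => hx (hagree x hxe).symm)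

lemma isLocalStep_dStep : IsLocalStep (dStep (G := G)) where
  red_subset h := h.1.subset
  signDiff_nonempty := by
    rintro C C' ⟨-, w, hw, hw', -⟩
    exact ⟨w, by simp [mem_signDiff, hw, hw']⟩
  of_sameChange := by
    rintro C₁ C₁' C₂ C₂' ⟨hred, w, hw, hw', hagree⟩ hs
    have hw₁ : w ∈ C₁.signDiff C₁' := by simp [mem_signDiff, hw, hw']
    have hsd := hs.red_sdiff
    rw [hred, sdiff_self, bot_eq_empty, sdiff_eq_empty_iff_subset] at hsd
    exact ⟨subset_antisymm hs.red_subset hsd, w, (hs.sign_of_mem w hw₁).1.trans hw,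
      (hs.sign_of_mem w hw₁).2.trans hw',
      fun x hx => (hs.sign_of_not_mem x (notMem_signDiff.2 (hagree x hx).symm)).symm⟩

lemma isLocalStep_DStep : IsLocalStep (DStep (G := G)) where
  red_subset := by
    rintro C C' ⟨e, -, hred, -⟩
    exact hred ▸ erase_subset e C.red
  signDiff_nonempty := by
    rintro C C' ⟨e, he, -, -, u, v, rfl, hu, -⟩
    exact ⟨u, by simp [mem_signDiff, C.sign_eq_none_of_mem he (Sym2.mem_mk_left u v), hu]⟩
  of_sameChange := by
    rintro C₁ C₁' C₂ C₂' ⟨e, he, hred, hagree, u, v, rfl, hu, hv⟩ hs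
    have hsd : C₂.red \ C₂'.red = {s(u, v)} := by rw [hs.red_sdiff, hred, sdiff_erase_self he]
    have hu₁ : u ∈ C₁.signDiff C₁' := by
      simp [mem_signDiff, C₁.sign_eq_none_of_mem he (Sym2.mem_mk_left u v), hu]
    have hv₁ : v ∈ C₁.signDiff C₁' := by
      simp [mem_signDiff, C₁.sign_eq_none_of_mem he (Sym2.mem_mk_right u v), hv]
    refine ⟨s(u, v), (mem_sdiff.1 (hsd ▸ mem_singleton_self _)).1, ?_,
      fun x hx => (hs.sign_of_not_mem x (notMem_signDiff.2 (hagree x hx).symm)).symm,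
      u, v, rfl, (hs.sign_of_mem u hu₁).2.trans hu, (hs.sign_of_mem v hv₁).2.trans hv⟩
    rw [← sdiff_singleton_eq_erase, ← hsd, Finset.sdiff_sdiff_eq_self hs.red_subset]

lemma disjoint_signDiff_of_dStep_dStep (h₁ : dStep C C') (h₂ : dStep C' C'') :
    Disjoint (C.signDiff C') (C'.signDiff C'') :=
  Set.disjoint_left.2 fun _ hx hx' => by
    simpa [(h₁.sign_of_mem_signDiff hx).2] using (h₂.sign_of_mem_signDiff hx').1

lemma disjoint_signDiff_of_DStep_DStep (h₁ : DStep C C') (h₂ : DStep C' C'') :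
    Disjoint (C.signDiff C') (C'.signDiff C'') :=
  Set.disjoint_left.2 fun _ hx hx' =>
    hx ((h₁.sign_eq_none_of_mem_signDiff hx).trans (h₂.sign_eq_none_of_mem_signDiff hx').symm)

lemma disjoint_signDiff_of_dStep_DStep (h₁ : dStep C C') (h₂ : DStep C' C'') :
    Disjoint (C.signDiff C') (C'.signDiff C'') :=
  Set.disjoint_left.2 fun _ hx hx' => by
    simpa [(h₁.sign_of_mem_signDiff hx).2] using h₂.sign_eq_none_of_mem_signDiff hx'

end steps

section mixed

variable {C C' C'' : Config G}

/-- The one exception to `Config.IsLocalStep.complete`: `D` deletes the red edge `uv` giving `u`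
the plus, and `d` then turns that plus into a minus. Such a path pairs with the one giving `v`
the plus instead. -/
lemma DStep_dStep_negSigns (h₁ : DStep C C') (h₂ : dStep C' C'')
    (hd : ¬Disjoint (C.signDiff C') (C'.signDiff C'')) :
    DStep C (C'.negSigns (C.signDiff C')) ∧ dStep (C'.negSigns (C.signDiff C')) C'' ∧
      ¬Disjoint (C.signDiff (C'.negSigns (C.signDiff C')))
        ((C'.negSigns (C.signDiff C')).signDiff C'') := by
  obtain ⟨e, he, hred, hagree, u, v, rfl, hu, hv⟩ := h₁
  obtain ⟨hred₂, w, hw, hw', hagree₂⟩ := h₂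
  obtain ⟨x, hx₁, hx₂⟩ := Set.not_disjoint_iff.1 hd
  obtain rfl : x = w := by_contra fun h => hx₂ (hagree₂ x h).symm
  have hxe : x ∈ s(u, v) := by_contra fun h => hx₁ (hagree x h).symm
  obtain rfl : x = u := by
    rcases Sym2.mem_iff.1 hxe with rfl | rfl
    · rfl
    · simp [hv] at hw
  have hxv : x ≠ v := by
    rintro rfl
    simp [hv] at hw
  have hv₁ : v ∈ C.signDiff C' := by
    simp [mem_signDiff, C.sign_eq_none_of_mem he (Sym2.mem_mk_right x v), hv]
  have hS : ∀ y ∉ s(x, v), y ∉ C.signDiff C' := fun y hy => notMem_signDiff.2 (hagree y hy).symm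
  have hPx : (C'.negSigns (C.signDiff C')).sign x = some false := by
    rw [negSigns_sign_of_mem hx₁, hu]
    rfl
  have hPv : (C'.negSigns (C.signDiff C')).sign v = some true := by
    rw [negSigns_sign_of_mem hv₁, hv]
    rfl
  refine ⟨⟨s(v, x), Sym2.eq_swap ▸ he, Sym2.eq_swap ▸ hred, fun y hy => ?_, v, x, rfl, hPv, hPx⟩,
    ⟨hred₂, v, hPv, by rw [hagree₂ v hxv.symm, hv], fun y hy => ?_⟩,
    Set.not_disjoint_iff.2 ⟨v, ?_, ?_⟩⟩
  · rw [Sym2.eq_swap] at hy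
    rw [negSigns_sign_of_not_mem (hS y hy), hagree y hy]
  · by_cases hyx : y = x
    · rw [hyx, hPx, hw']
    · have hyS : y ∉ C.signDiff C' := hS y (by simp [Sym2.mem_iff, hyx, hy])
      rw [negSigns_sign_of_not_mem hyS, hagree₂ y hyx]
  · simp [mem_signDiff, C.sign_eq_none_of_mem he (Sym2.mem_mk_right x v), hPv]
  · simp [mem_signDiff, hPv, hagree₂ v hxv.symm, hv]

def IsMixedPath (C C' C'' : Config G) : Prop :=
  (dStep C C' ∧ DStep C' C'') ∨ (DStep C C' ∧ dStep C' C'')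

lemma IsMixedPath.red_subset (h : IsMixedPath C C' C'') : C'.red ⊆ C.red ∧ C''.red ⊆ C'.red := by
  rcases h with ⟨h₁, h₂⟩ | ⟨h₁, h₂⟩
  · exact ⟨isLocalStep_dStep.red_subset h₁, isLocalStep_DStep.red_subset h₂⟩
  · exact ⟨isLocalStep_DStep.red_subset h₁, isLocalStep_dStep.red_subset h₂⟩

lemma IsMixedPath.DStep_dStep_of_not_disjoint (h : IsMixedPath C C' C'')
    (hd : ¬Disjoint (C.signDiff C') (C'.signDiff C'')) : DStep C C' ∧ dStep C' C'' :=
  h.resolve_left fun h => hd (disjoint_signDiff_of_dStep_DStep h.1 h.2)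

noncomputable def mixedPartner (C C' C'' : Config G) (h : C'.red ⊆ C.red ∧ C''.red ⊆ C'.red) :
    Config G :=
  if Disjoint (C.signDiff C') (C'.signDiff C'') then complete C C' C'' h.1 h.2
  else C'.negSigns (C.signDiff C')

lemma IsMixedPath.isMixedPath_mixedPartner (h : IsMixedPath C C' C'') :
    IsMixedPath C (mixedPartner C C' C'' h.red_subset) C'' := by
  unfold mixedPartner
  split_ifs with hd
  · rcases h with ⟨h₁, h₂⟩ | ⟨h₁, h₂⟩
    · exact Or.inr (isLocalStep_dStep.complete isLocalStep_DStep h₁ h₂ hd)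
    · exact Or.inl (isLocalStep_DStep.complete isLocalStep_dStep h₁ h₂ hd)
  · obtain ⟨h₁, h₂⟩ := h.DStep_dStep_of_not_disjoint hd
    exact Or.inr ⟨(DStep_dStep_negSigns h₁ h₂ hd).1, (DStep_dStep_negSigns h₁ h₂ hd).2.1⟩

lemma IsMixedPath.mixedPartner_ne (h : IsMixedPath C C' C'') :
    mixedPartner C C' C'' h.red_subset ≠ C' := by
  unfold mixedPartner
  split_ifs with hd
  · exact complete_ne _ _ (h.elim (fun h => isLocalStep_dStep.signDiff_nonempty h.1)
      (fun h => isLocalStep_DStep.signDiff_nonempty h.1))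
  · have h₁ := (h.DStep_dStep_of_not_disjoint hd).1
    obtain ⟨x, hx⟩ := isLocalStep_DStep.signDiff_nonempty h₁
    exact negSigns_ne hx fun h' => hx (by rw [h₁.sign_eq_none_of_mem_signDiff hx, h'])

lemma IsMixedPath.mixedPartner_mixedPartner (h : IsMixedPath C C' C'') :
    mixedPartner C (mixedPartner C C' C'' h.red_subset) C'' h.isMixedPath_mixedPartner.red_subset = C' := by
  unfold mixedPartner
  split_ifs with hd hd' hd'
  · exact complete_complete _ _ hd _ _
  · exact absurd (disjoint_signDiff_complete _ _ hd) hd'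
  · obtain ⟨h₁, h₂⟩ := h.DStep_dStep_of_not_disjoint hd
    exact absurd hd' (DStep_dStep_negSigns h₁ h₂ hd).2.2
  · obtain ⟨h₁, -⟩ := h.DStep_dStep_of_not_disjoint hd
    rw [signDiff_negSigns fun x hx => h₁.sign_eq_none_of_mem_signDiff hx, negSigns_negSigns]

lemma card_dStep_DStep_eq_card_DStep_dStep [Fintype V] (C C'' : Config G) :
    (#{C' | dStep C C' ∧ DStep C' C''} : ZMod 2) = #{C' | DStep C C' ∧ dStep C' C''} := by
  have hexcl : Disjoint ({C' | dStep C C' ∧ DStep C' C''} : Finset (Config G))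
      ({C' | DStep C C' ∧ dStep C' C''} : Finset (Config G)) := by
    refine disjoint_filter.2 fun C' _ h₁ h₂ => ?_
    obtain ⟨e, he, hred, -⟩ := h₂.1
    exact notMem_erase e C.red (hred ▸ h₁.1.1 ▸ he)
  rw [← CharTwo.add_eq_zero, ← Nat.cast_add, ← card_union_of_disjoint hexcl, ← filter_or]
  have hmem {C'} (h : C' ∈ ({C' | (dStep C C' ∧ DStep C' C'') ∨ (DStep C C' ∧ dStep C' C'')} :
      Finset _)) : IsMixedPath C C' C'' :=
    (mem_filter.1 h).2
  exact cast_card_eq_zero_of_involution _ (fun C' h => mixedPartner C C' C'' (hmem h).red_subset)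
    (fun C' h => (hmem h).mixedPartner_ne)
    (fun C' h => mem_filter.2 ⟨mem_univ _, (hmem h).isMixedPath_mixedPartner⟩)
    (fun C' h => (hmem h).mixedPartner_mixedPartner)

end mixed

variable [Fintype V]

theorem D_d_are_commuting_differentials_general (G : SimpleGraph V) :
    Dmap G ∘ₗ Dmap G = 0 ∧ dmap G ∘ₗ dmap G = 0 ∧
      Dmap G ∘ₗ dmap G = dmap G ∘ₗ Dmap G ∧
      (Dmap G + dmap G) ∘ₗ (Dmap G + dmap G) = 0 := by
  have hDD : Dmap G ∘ₗ Dmap G = 0 :=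
    sumLin_comp_eq_zero (isLocalStep_DStep.card_comp_eq_zero disjoint_signDiff_of_DStep_DStep)
  have hdd : dmap G ∘ₗ dmap G = 0 :=
    sumLin_comp_eq_zero (isLocalStep_dStep.card_comp_eq_zero disjoint_signDiff_of_dStep_dStep)
  have hDd : Dmap G ∘ₗ dmap G = dmap G ∘ₗ Dmap G :=
    sumLin_comp_eq_sumLin_comp card_dStep_DStep_eq_card_DStep_dStep
  refine ⟨hDD, hdd, hDd, ?_⟩
  rw [LinearMap.add_comp, LinearMap.comp_add, LinearMap.comp_add, hDD, hdd, hDd, zero_add,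
    add_zero, ← two_smul (ZMod 2), show (2 : ZMod 2) = 0 from rfl, zero_smul]

/-- `D ∘ D = 0`, `d ∘ d = 0`, `D ∘ d = d ∘ D`, and `(D+d) ∘ (D+d) = 0`. -/
theorem D_d_are_commuting_differentials (G : SimpleGraph V) (hG : G.IsTree) :
    Dmap G ∘ₗ Dmap G = 0 ∧ dmap G ∘ₗ dmap G = 0 ∧
      Dmap G ∘ₗ dmap G = dmap G ∘ₗ Dmap G ∧
      (Dmap G + dmap G) ∘ₗ (Dmap G + dmap G) = 0 :=
  D_d_are_commuting_differentials_general G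

end Seifert
end

section
/- For every finite tree T with V vertices, enumerated 1,…,V, with Seifert matrix S, the following identity holds in ℤ[t]: det(tS − Sᵀ) equals the sum over all matchings R of T of t^{|R|} (1−t)^{V−2|R|}. -/
open Polynomial Matrix

attribute [local instance] Classical.propDecidable

namespace Seifert

variable {V : Type} [Fintype V]

/-!
Expand `det (t S - Sᵀ)` by the Leibniz formula over permutations of the vertices. An
off-diagonal entry vanishes unless its two vertices are adjacent, so only permutations moving
every vertex to a neighbour contribute. In a forest such a permutation is an involution, since
a longer cycle of it would be a cycle of the graph; so these permutations are exactly the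
partner maps of the matchings. For the involution of a matching `R`, every fixed vertex
contributes a diagonal entry `1 - t`, and every edge of `R` contributes the product `-t` of its
two entries `t` and `-1` together with a factor `-1` to the sign.
-/

noncomputable def alexMatrix (G : SimpleGraph V) {m : ℕ} (e : V ≃ Fin m) : Matrix V V ℤ[X] :=
  fun v w => if v = w then 1 - X else if G.Adj v w then (if e v < e w then X else -1) else 0

section AlexMatrix

variable {G : SimpleGraph V} {m : ℕ} (e : V ≃ Fin m)

theorem alexDet_eq_det_alexMatrix : alexDet G e = (alexMatrix G e).det := by
  rw [alexDet, ← det_submatrix_equiv_self e]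
  congr 1
  refine Matrix.ext fun v w => ?_
  simp only [submatrix_apply, Matrix.sub_apply, Matrix.smul_apply, transpose_apply, map_apply,
    seifertMatrix, alexMatrix, Equiv.symm_apply_apply, EmbeddingLike.apply_eq_iff_eq, smul_eq_mul]
  split_ifs <;> simp_all [G.adj_comm] <;> first | ring | grind [Equiv.apply_eq_iff_eq]

omit [Fintype V] in
theorem alexMatrix_apply_self (v : V) : alexMatrix G e v v = 1 - X := if_pos rfl

omit [Fintype V] in
theorem alexMatrix_eq_zero {v w : V} (hne : v ≠ w) (h : ¬G.Adj v w) : alexMatrix G e v w = 0 := by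
  simp [alexMatrix, hne, h]

omit [Fintype V] in
theorem alexMatrix_mul_alexMatrix {v w : V} (h : G.Adj v w) :
    alexMatrix G e v w * alexMatrix G e w v = -X := by
  have hne : e v ≠ e w := e.injective.ne h.ne
  rcases hne.lt_or_gt with hlt | hlt <;>
    simp [alexMatrix, h, h.symm, h.ne, h.ne', hlt, hlt.not_gt]

end AlexMatrix

def MovesAlongEdges (G : SimpleGraph V) (σ : Equiv.Perm V) : Prop :=
  ∀ v, σ v ≠ v → G.Adj v (σ v)

noncomputable def movedEdges (σ : Equiv.Perm V) : Finset (Sym2 V) :=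
  σ.support.image fun v => s(v, σ v)

noncomputable def partner (R : Finset (Sym2 V)) (v : V) : V :=
  if h : ∃ w, s(v, w) ∈ R then h.choose else v

section Matchings

variable {G : SimpleGraph V} {σ τ : Equiv.Perm V} {R : Finset (Sym2 V)} {v w : V}

theorem MovesAlongEdges.involutive (hG : G.IsAcyclic) (hσ : MovesAlongEdges G σ) :
    Function.Involutive σ := by
  intro v
  by_contra hvv
  have hv : σ v ≠ v := fun h => hvv (by rw [h, h])
  let H := G.deleteEdges {s(v, σ v)}
  -- The orbit of `σ v` returns to `v` through edges of `H`, so `s(v, σ v)` is not a bridge.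
  suffices H.Reachable (σ v) v from SimpleGraph.isAcyclic_iff_forall_adj_isBridge.1 hG (hσ v hv) this.symm
  by_contra hnot
  have hstep : ∀ x, H.Reachable (σ v) x → H.Reachable (σ v) (σ x) := by
    intro x hx
    by_cases hx' : σ x = x
    · rwa [hx']
    refine hx.trans (SimpleGraph.Adj.reachable ?_)
    rw [SimpleGraph.deleteEdges_adj, Set.mem_singleton_iff, Sym2.eq_iff]
    refine ⟨hσ x hx', ?_⟩
    rintro (⟨rfl, -⟩ | ⟨rfl, h⟩)
    · exact hnot hx
    · exact hvv h
  exact hnot (by simpa using Equiv.Perm.perm_symm_on_of_perm_on_finite hstep (.refl _))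

theorem mk_mem_movedEdges_iff (hσ : Function.Involutive σ) :
    s(v, w) ∈ movedEdges σ ↔ σ v = w ∧ v ≠ w := by
  simp only [movedEdges, Finset.mem_image, Equiv.Perm.mem_support, Sym2.eq_iff]
  constructor
  · rintro ⟨u, hu, ⟨rfl, rfl⟩ | ⟨rfl, rfl⟩⟩
    · exact ⟨rfl, Ne.symm hu⟩
    · exact ⟨hσ u, hu⟩
  · rintro ⟨rfl, hne⟩
    exact ⟨v, Ne.symm hne, Or.inl ⟨rfl, rfl⟩⟩

theorem movedEdges_inj (hσ : Function.Involutive σ) (hτ : Function.Involutive τ) :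
    movedEdges σ = movedEdges τ ↔ σ = τ := by
  refine ⟨fun h => Equiv.ext fun v => ?_, fun h => h ▸ rfl⟩
  by_cases hv : σ v = v
  · by_cases hw : τ v = v
    · rw [hv, hw]
    · exact ((mk_mem_movedEdges_iff hσ).1 (h ▸ (mk_mem_movedEdges_iff hτ).2 ⟨rfl, Ne.symm hw⟩)).1
  · exact ((mk_mem_movedEdges_iff hτ).1 (h ▸ (mk_mem_movedEdges_iff hσ).2 ⟨rfl, Ne.symm hv⟩)).1.symm

theorem MovesAlongEdges.isMatching_movedEdges (hσ : MovesAlongEdges G σ)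
    (hinv : Function.Involutive σ) : IsMatching G (movedEdges σ) := by
  refine ⟨fun r hr => ?_, fun r hr r' hr' hne v hv hv' => hne ?_⟩
  · obtain ⟨v, hv, rfl⟩ := Finset.mem_image.1 hr
    exact hσ v (Equiv.Perm.mem_support.1 hv)
  · obtain ⟨w, rfl⟩ := Sym2.mem_iff_exists.1 hv
    obtain ⟨w', rfl⟩ := Sym2.mem_iff_exists.1 hv'
    rw [← ((mk_mem_movedEdges_iff hinv).1 hr).1, ← ((mk_mem_movedEdges_iff hinv).1 hr').1]

theorem mk_partner_mem (h : partner R v ≠ v) : s(v, partner R v) ∈ R := by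
  by_cases hex : ∃ w, s(v, w) ∈ R
  · rw [partner, dif_pos hex]
    exact hex.choose_spec
  · exact absurd (dif_neg hex) h

omit [Fintype V] in
theorem IsMatching.eq_of_mk_mem {w' : V} (hR : IsMatching G R) (h : s(v, w) ∈ R)
    (h' : s(v, w') ∈ R) : w = w' := by
  by_contra hne
  exact hR.2 _ h _ h' (mt Sym2.congr_right.1 hne) v (Sym2.mem_mk_left v w) (Sym2.mem_mk_left v w')

theorem IsMatching.mk_mem_iff (hR : IsMatching G R) : s(v, w) ∈ R ↔ partner R v = w ∧ v ≠ w := by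
  constructor
  · intro h
    have hex : ∃ u, s(v, u) ∈ R := ⟨w, h⟩
    refine ⟨?_, (hR.1 _ h : G.Adj v w).ne⟩
    rw [partner, dif_pos hex]
    exact hR.eq_of_mk_mem hex.choose_spec h
  · rintro ⟨rfl, hne⟩
    exact mk_partner_mem (Ne.symm hne)

theorem IsMatching.partner_involutive (hR : IsMatching G R) : Function.Involutive (partner R) := by
  intro v
  by_cases h : partner R v = v
  · rw [h, h]
  · exact (hR.mk_mem_iff.1 (Sym2.eq_swap ▸ mk_partner_mem h)).1

noncomputable def IsMatching.partnerPerm (hR : IsMatching G R) : Equiv.Perm V :=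
  hR.partner_involutive.toPerm

theorem IsMatching.movesAlongEdges_partnerPerm (hR : IsMatching G R) :
    MovesAlongEdges G hR.partnerPerm :=
  fun _ hv => hR.1 _ (mk_partner_mem hv)

theorem IsMatching.movedEdges_partnerPerm (hR : IsMatching G R) :
    movedEdges hR.partnerPerm = R := by
  ext r
  induction r using Sym2.ind with
  | _ v w => rw [mk_mem_movedEdges_iff hR.partner_involutive, hR.mk_mem_iff]; rfl

noncomputable def matchingEquiv (hG : G.IsAcyclic) :
    {σ : Equiv.Perm V // MovesAlongEdges G σ} ≃ {R : Finset (Sym2 V) // IsMatching G R} where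
  toFun σ := ⟨movedEdges σ.1, σ.2.isMatching_movedEdges (σ.2.involutive hG)⟩
  invFun R := ⟨R.2.partnerPerm, R.2.movesAlongEdges_partnerPerm⟩
  left_inv σ := by
    have hinv := σ.2.involutive hG
    have hR := σ.2.isMatching_movedEdges hinv
    exact Subtype.ext ((movedEdges_inj hR.partner_involutive hinv).1 hR.movedEdges_partnerPerm)
  right_inv R := Subtype.ext R.2.movedEdges_partnerPerm

end Matchings

section Involutions

open Finset

variable {σ : Equiv.Perm V} (hσ : Function.Involutive σ)
include hσ

theorem filter_support_eq_pair {a : V} (ha : a ∈ σ.support) :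
    {v ∈ σ.support | s(v, σ v) = s(a, σ a)} = {a, σ a} := by
  ext v
  have ha' := Equiv.Perm.mem_support.1 ha
  simp only [mem_filter, Equiv.Perm.mem_support, Sym2.eq_iff, mem_insert, mem_singleton]
  constructor
  · rintro ⟨-, ⟨h, -⟩ | ⟨h, -⟩⟩ <;> simp [h]
  · rintro (rfl | rfl)
    · exact ⟨ha', Or.inl ⟨rfl, rfl⟩⟩
    · exact ⟨by rwa [hσ a, ne_comm], Or.inr ⟨rfl, hσ a⟩⟩

theorem card_support_eq_two_mul_card_movedEdges : #σ.support = 2 * #(movedEdges σ) := by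
  rw [card_eq_sum_card_image (fun v => s(v, σ v)), mul_comm, ← smul_eq_mul, ← sum_const]
  refine sum_congr rfl fun r hr => ?_
  obtain ⟨a, ha, rfl⟩ := mem_image.1 hr
  rw [filter_support_eq_pair hσ ha, card_pair (Equiv.Perm.mem_support.1 ha).symm]

theorem prod_support_eq_pow {M : Type*} [CommMonoid M] (f : V → M) (c : M)
    (h : ∀ v ∈ σ.support, f v * f (σ v) = c) : ∏ v ∈ σ.support, f v = c ^ #(movedEdges σ) := by
  rw [← prod_fiberwise_of_maps_to (t := movedEdges σ) (fun v hv => mem_image_of_mem _ hv),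
    ← prod_const]
  refine prod_congr rfl fun r hr => ?_
  obtain ⟨a, ha, rfl⟩ := mem_image.1 hr
  rw [filter_support_eq_pair hσ ha, prod_pair (Equiv.Perm.mem_support.1 ha).symm, h a ha]

theorem sign_eq_neg_one_pow_card_movedEdges : Equiv.Perm.sign σ = (-1) ^ #(movedEdges σ) := by
  have hsq : σ ^ 2 = 1 := Equiv.ext hσ
  rw [Equiv.Perm.sign_of_pow_two_eq_one hsq, Equiv.Perm.card_fixedPoints,
    Equiv.Perm.sum_cycleType, Nat.sub_sub_self (card_le_univ _),
    card_support_eq_two_mul_card_movedEdges hσ, Nat.mul_div_cancel_left _ two_pos]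

end Involutions

section Leibniz

open Finset

variable {G : SimpleGraph V} {m : ℕ} (e : V ≃ Fin m) {σ : Equiv.Perm V}

theorem prod_alexMatrix_eq_zero (hσ : ¬MovesAlongEdges G σ) : ∏ v, alexMatrix G e (σ v) v = 0 := by
  simp only [MovesAlongEdges, not_forall] at hσ
  obtain ⟨v, hv, hadj⟩ := hσ
  exact prod_eq_zero (mem_univ v) (alexMatrix_eq_zero e hv fun h => hadj h.symm)

theorem sign_mul_prod_alexMatrix (hσ : MovesAlongEdges G σ) (hinv : Function.Involutive σ) :
    ((Equiv.Perm.sign σ : ℤ) : ℤ[X]) * ∏ v, alexMatrix G e (σ v) v =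
      X ^ #(movedEdges σ) * (1 - X) ^ (Fintype.card V - 2 * #(movedEdges σ)) := by
  have hfixed : ∏ v ∈ σ.supportᶜ, alexMatrix G e (σ v) v =
      (1 - X) ^ (Fintype.card V - 2 * #(movedEdges σ)) := by
    rw [prod_congr rfl fun v hv => by
        rw [Equiv.Perm.notMem_support.1 (mem_compl.1 hv), alexMatrix_apply_self],
      prod_const, card_compl, card_support_eq_two_mul_card_movedEdges hinv]
  have hmoved : ∏ v ∈ σ.support, alexMatrix G e (σ v) v = (-X) ^ #(movedEdges σ) :=
    prod_support_eq_pow hinv _ _ fun v hv => by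
      rw [hinv v, mul_comm]
      exact alexMatrix_mul_alexMatrix e (hσ v (Equiv.Perm.mem_support.1 hv))
  have hpairs : ((-1) ^ #(movedEdges σ) : ℤ[X]) * (-X) ^ #(movedEdges σ) = X ^ #(movedEdges σ) := by
    rw [← mul_pow, neg_one_mul, neg_neg]
  rw [← prod_compl_mul_prod σ.support, hfixed, hmoved, sign_eq_neg_one_pow_card_movedEdges hinv]
  push_cast
  rw [← hpairs]
  ring

end Leibniz

/-- `det (t S - Sᵀ) = Σ_R t^{|R|} (1-t)^{V-2|R|}` in `ℤ[t]`. -/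
theorem alexDet_eq_matching_sum (G : SimpleGraph V) (hG : G.IsTree)
    {m : ℕ} (e : V ≃ Fin m) :
    alexDet G e =
      ∑ R : {R : Finset (Sym2 V) // IsMatching G R},
        X ^ R.1.card * (1 - X) ^ (Fintype.card V - 2 * R.1.card) := by
  have hsupp : ∀ σ : Equiv.Perm V, ((Equiv.Perm.sign σ : ℤ) : ℤ[X]) *
      ∏ v, alexMatrix G e (σ v) v ≠ 0 → MovesAlongEdges G σ := fun σ hσ => by
    by_contra h
    rw [prod_alexMatrix_eq_zero e h, mul_zero] at hσ
    exact hσ rfl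
  rw [alexDet_eq_det_alexMatrix, det_apply', ← Finset.sum_filter_of_ne fun σ _ => hsupp σ,
    Finset.sum_subtype (p := MovesAlongEdges G) _ fun σ => by simp]
  exact Fintype.sum_equiv (matchingEquiv hG.isAcyclic) _ _ fun σ =>
    sign_mul_prod_alexMatrix e σ.2 (σ.2.involutive hG.isAcyclic)

end Seifert
end

section
/- Let T be a finite tree with V vertices, enumerated 1,…,V, and let S be its Seifert matrix. Then det(S − Sᵀ) = 1 if T admits a perfect matching, and det(S − Sᵀ) = 0 otherwise. -/
open Polynomial Matrix

attribute [local instance] Classical.propDecidable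

/-!
Expanding `det (S - Sᵀ)` over permutations, only the permutations `σ` moving every vertex to a
neighbour contribute, since `S - Sᵀ` vanishes off the edges. In a tree such a `σ` is an involution
(a longer cycle of `σ` would trace a cycle of the tree) and it is unique (two of them give two
perfect matchings, whose symmetric difference is a union of cycles), so it exists exactly when the
tree has a perfect matching. Each pair `{v, σ v}` then contributes `-1` to `sign σ` and
`(S - Sᵀ) v (σ v) * (S - Sᵀ) (σ v) v = -1` to the product, so the only term is `1`.
-/

open Equiv Function Finset

namespace SimpleGraph

variable {V : Type*} {G H : SimpleGraph V}

theorem IsAcyclic.not_adj_of_isCycles [Finite V] (hG : G.IsAcyclic) (hle : H ≤ G)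
    (hH : H.IsCycles) {v w : V} : ¬ H.Adj v w := fun hvw =>
  isBridge_iff.mp (isAcyclic_iff_forall_adj_isBridge.mp (hG.anti hle) hvw)
    (hH.reachable_deleteEdges hvw)

theorem isCycles_fromRel_perm {c : Perm V} (hc : ∀ x, c (c x) = x → c x = x) :
    (fromRel fun x y => c x = y).IsCycles := by
  intro x ⟨y, hy⟩
  rw [mem_neighborSet, fromRel_adj] at hy
  have hx : c x ≠ x := by
    obtain ⟨hne, h | h⟩ := hy
    · exact fun hx => hne (hx.symm.trans h)
    · exact fun hx => hne (c.injective (h.trans hx.symm)).symm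
  have hneighbors : (fromRel fun x y => c x = y).neighborSet x = {c x, c.symm x} := by
    ext y
    simp only [mem_neighborSet, fromRel_adj, Set.mem_insert_iff, Set.mem_singleton_iff,
      eq_symm_apply, eq_comm (a := y) (b := c x)]
    refine ⟨fun h => h.2, fun h => ⟨?_, h⟩⟩
    rintro rfl
    exact h.elim hx hx
  rw [hneighbors, Set.ncard_pair]
  intro h
  exact hx (hc x (by rw [h, apply_symm_apply]))

theorem IsAcyclic.involutive_of_forall_adj [Finite V] (hG : G.IsAcyclic) {σ : Perm V}
    (hσ : ∀ v, G.Adj v (σ v)) : Involutive σ := by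
  classical
  intro v
  by_contra hv
  have hσv : σ v ≠ v := fun h => hv (by rw [h, h])
  set c := σ.cycleOf v
  have hc : ∀ x, c (c x) = x → c x = x := by
    intro x hcx
    by_contra hx
    have hc2 : c ^ 2 = 1 := (σ.isCycle_cycleOf hσv).pow_eq_one_iff.mpr ⟨x, hx, hcx⟩
    have h2 := σ.cycleOf_pow_apply_self v 2
    rw [hc2, Perm.one_apply, sq, Perm.mul_apply] at h2
    exact hv h2.symm
  have hcG : ∀ x, c x ≠ x → G.Adj x (c x) := by
    intro x hx
    by_cases hvx : σ.SameCycle v x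
    · rw [hvx.cycleOf_apply]
      exact hσ x
    · exact absurd (Perm.cycleOf_apply_of_not_sameCycle hvx) hx
  have hle : (fromRel fun x y => c x = y) ≤ G := by
    rintro x y ⟨hne, rfl | rfl⟩
    · exact hcG x hne.symm
    · exact (hcG y hne).symm
  exact hG.not_adj_of_isCycles hle (isCycles_fromRel_perm hc) (v := v) (w := σ v)
    ((fromRel_adj _ _ _).mpr ⟨hσv.symm, Or.inl (σ.cycleOf_apply_self v)⟩)

def perfectMatchingOfInvolutive {μ : Perm V} (hμ : Involutive μ) (hadj : ∀ v, G.Adj v (μ v)) :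
    G.Subgraph where
  verts := Set.univ
  Adj v w := μ v = w
  adj_sub := by rintro v _ rfl; exact hadj v
  edge_vert _ := trivial
  symm := ⟨by rintro v _ rfl; exact hμ v⟩

theorem isPerfectMatching_perfectMatchingOfInvolutive {μ : Perm V} (hμ : Involutive μ)
    (hadj : ∀ v, G.Adj v (μ v)) : (perfectMatchingOfInvolutive hμ hadj).IsPerfectMatching :=
  Subgraph.isPerfectMatching_iff.mpr fun _ => existsUnique_eq'

theorem IsAcyclic.perm_eq_of_forall_adj [Finite V] (hG : G.IsAcyclic) {σ τ : Perm V}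
    (hσ : ∀ v, G.Adj v (σ v)) (hτ : ∀ v, G.Adj v (τ v)) : σ = τ := by
  ext v
  by_contra hne
  have hMσ := isPerfectMatching_perfectMatchingOfInvolutive (hG.involutive_of_forall_adj hσ) hσ
  have hMτ := isPerfectMatching_perfectMatchingOfInvolutive (hG.involutive_of_forall_adj hτ) hτ
  refine hG.not_adj_of_isCycles ?_ (hMσ.symmDiff_isCycles hMτ) (v := v) (w := σ v)
    (Or.inl ⟨rfl, fun h : τ v = σ v => hne h.symm⟩)
  exact symmDiff_le_sup.trans (sup_le (Subgraph.spanningCoe_le _) (Subgraph.spanningCoe_le _))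

end SimpleGraph

namespace Equiv.Perm

variable {α : Type*} [Fintype α] {μ : Perm α}

theorem sign_of_involutive_of_forall_ne [DecidableEq α] (hμ : Involutive μ)
    (hfix : ∀ a, μ a ≠ a) : sign μ = (-1) ^ (Fintype.card α / 2) := by
  have hμ2 : μ ^ 2 = 1 := by
    ext a
    exact hμ a
  have hno : Fintype.card (fixedPoints μ) = 0 :=
    Fintype.card_eq_zero_iff.mpr ⟨fun a => hfix a a.2⟩
  rw [sign_of_pow_two_eq_one hμ2, hno, Nat.sub_zero]

theorem prod_eq_neg_one_pow_of_involutive {R : Type*} [CommMonoid R] [HasDistribNeg R]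
    (hμ : Involutive μ) (hfix : ∀ a, μ a ≠ a) {f : α → R} (hf : ∀ a, f a * f (μ a) = -1) :
    ∏ a, f a = (-1) ^ (Fintype.card α / 2) := by
  -- any linear order selects one element `a < μ a` from each pair `{a, μ a}`
  let _ : LinearOrder α := LinearOrder.lift' (Fintype.equivFin α) (Fintype.equivFin α).injective
  set T := univ.filter fun a => a < μ a
  have hTc : univ.filter (fun a => ¬ a < μ a) = T.map μ.toEmbedding := by
    ext a
    simp only [mem_filter, mem_univ, true_and, mem_map, toEmbedding_apply, T]
    constructor
    · intro ha
      refine ⟨μ a, ?_, hμ a⟩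
      rw [hμ a]
      exact lt_of_le_of_ne (not_lt.mp ha) (hfix a)
    · rintro ⟨b, hb, rfl⟩
      rw [hμ b]
      exact hb.asymm
  have hcard : Fintype.card α = 2 * #T := by
    rw [← card_univ, ← card_filter_add_card_filter_not (fun a => a < μ a), hTc, card_map]
    ring
  rw [← prod_filter_mul_prod_filter_not univ (fun a => a < μ a), hTc, prod_map,
    ← prod_mul_distrib]
  simp only [toEmbedding_apply, hf, prod_const, hcard, Nat.mul_div_cancel_left _ two_pos, T]

theorem sign_mul_prod_eq_one [DecidableEq α] {R : Type*} [CommRing R] (hμ : Involutive μ)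
    (hfix : ∀ a, μ a ≠ a) {f : α → R} (hf : ∀ a, f a * f (μ a) = -1) :
    (sign μ : ℤ) * ∏ a, f a = (1 : R) := by
  rw [sign_of_involutive_of_forall_ne hμ hfix, prod_eq_neg_one_pow_of_involutive hμ hfix hf]
  push_cast
  rw [← mul_pow, neg_one_mul, neg_neg, one_pow]

end Equiv.Perm

namespace Matrix

variable {V R : Type*} [Fintype V] [DecidableEq V] [CommRing R] {G : SimpleGraph V}

theorem det_eq_ite_of_isAcyclic (hG : G.IsAcyclic) {B : Matrix V V R}
    (hB : ∀ u v, ¬ G.Adj u v → B u v = 0) (hB' : ∀ u v, G.Adj u v → B u v * B v u = -1) :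
    B.det = if ∃ μ : Perm V, ∀ v, G.Adj v (μ v) then 1 else 0 := by
  have hterm : ∀ σ : Perm V, ¬ (∀ v, G.Adj v (σ v)) → ∏ v, B (σ v) v = 0 := by
    intro σ hσ
    obtain ⟨v, hv⟩ := not_forall.mp hσ
    exact prod_eq_zero (mem_univ v) (hB _ _ fun h => hv h.symm)
  rw [det_apply']
  split_ifs with h
  · obtain ⟨μ, hμ⟩ := h
    rw [sum_eq_single μ (fun σ _ hσμ => by
      rw [hterm σ (fun hσ => hσμ (hG.perm_eq_of_forall_adj hσ hμ)), mul_zero]) (by simp)]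
    have hinv := hG.involutive_of_forall_adj hμ
    refine Perm.sign_mul_prod_eq_one hinv (fun v => (hμ v).ne.symm) fun v => ?_
    rw [hinv v]
    exact hB' _ _ (hμ v).symm
  · exact sum_eq_zero fun σ _ => by rw [hterm σ (fun hσ => h ⟨σ, hσ⟩), mul_zero]

end Matrix

namespace Seifert

theorem seifertMatrix_sub_transpose_apply {V : Type} (G : SimpleGraph V) {m : ℕ} (e : V ≃ Fin m)
    (u v : V) : (seifertMatrix G e - (seifertMatrix G e)ᵀ) (e u) (e v) =
      if G.Adj u v then (if e u < e v then 1 else -1) else 0 := by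
  simp only [Matrix.sub_apply, transpose_apply, seifertMatrix, symm_apply_apply,
    EmbeddingLike.apply_eq_iff_eq, G.adj_comm v u]
  by_cases huv : u = v
  · simp [huv]
  rcases (e.injective.ne huv).lt_or_gt with h | h <;>
    by_cases hadj : G.Adj u v <;> simp [huv, Ne.symm huv, h, h.not_gt, hadj]

variable {V : Type} [Fintype V]

theorem exists_isPerfectMatching_iff {G : SimpleGraph V} (hG : G.IsAcyclic) :
    (∃ R, IsPerfectMatching G R) ↔ ∃ μ : Perm V, ∀ v, G.Adj v (μ v) := by
  constructor
  · rintro ⟨R, ⟨hRG, hdisj⟩, hcover⟩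
    choose edge hedge hmem using hcover
    set partner : V → V := fun v => Sym2.Mem.other (hmem v)
    have hspec : ∀ v, s(v, partner v) = edge v := fun v => Sym2.other_spec (hmem v)
    have hadj : ∀ v, G.Adj v (partner v) := fun v => by
      simpa only [← hspec v, SimpleGraph.mem_edgeSet] using hRG _ (hedge v)
    have hedge_partner : ∀ v, edge (partner v) = edge v := fun v => by
      by_contra hne
      exact hdisj _ (hedge _) _ (hedge v) hne (partner v) (hmem _) (Sym2.other_mem (hmem v))
    have hinv : Involutive partner := fun v => by
      have h := (hspec (partner v)).trans ((hedge_partner v).trans (hspec v).symm)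
      rw [Sym2.eq_swap (a := v)] at h
      exact Sym2.congr_right.mp h
    exact ⟨hinv.toPerm, hadj⟩
  · rintro ⟨μ, hμ⟩
    have hinv := hG.involutive_of_forall_adj hμ
    have hedge : ∀ u w, u ∈ s(w, μ w) → s(w, μ w) = s(u, μ u) := by
      rintro u w hu
      rcases Sym2.mem_iff.mp hu with rfl | rfl
      · rfl
      · rw [hinv w, Sym2.eq_swap]
    refine ⟨univ.image fun v => s(v, μ v), ⟨?_, ?_⟩, fun v => ⟨s(v, μ v),
      mem_image_of_mem _ (mem_univ v), Sym2.mem_mk_left _ _⟩⟩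
    · simp only [mem_image, mem_univ, true_and]
      rintro _ ⟨v, rfl⟩
      exact hμ v
    · simp only [mem_image, mem_univ, true_and]
      rintro _ ⟨v, rfl⟩ _ ⟨w, rfl⟩ hne u hv hw
      exact hne ((hedge u v hv).trans (hedge u w hw).symm)

/-- `det (S - Sᵀ) = 1` if `T` admits a perfect matching, `0` otherwise. -/
theorem det_intersection_form (G : SimpleGraph V) (hG : G.IsTree)
    {m : ℕ} (e : V ≃ Fin m) :
    (seifertMatrix G e - (seifertMatrix G e)ᵀ).det =
      if ∃ R : Finset (Sym2 V), IsPerfectMatching G R then 1 else 0 := by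
  rw [← det_submatrix_equiv_self e, det_eq_ite_of_isAcyclic hG.isAcyclic (fun u v huv => ?_)
    (fun u v huv => ?_)]
  · exact if_congr (exists_isPerfectMatching_iff hG.isAcyclic).symm rfl rfl
  · simp only [submatrix_apply, seifertMatrix_sub_transpose_apply, huv, if_false]
  · simp only [submatrix_apply, seifertMatrix_sub_transpose_apply, huv, huv.symm, if_true]
    rcases (e.injective.ne huv.ne).lt_or_gt with h | h <;> simp [h, h.not_gt]

end Seifert
end
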